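/- Let N ∈ (0,1), R_c > 0 and h > 0. Suppose u, w : ℝ → ℝ are twice continuously differentiable on [0,h], satisfy u''(t) = 2N² w'(t) and −R_c w''(t) + 4N² w(t) − 2N² u'(t) = 0 for all t ∈ [0,h], and u(0) = u(h) = w(0) = w(h) = 0. Then u(t) = 0 and w(t) = 0 for all t ∈ [0,h]. Consequently, for any forcing constants q, G ∈ ℝ, the reduced micropolar boundary-value problem on [0,h] has at most one pair of twice continuously differentiable solutions. -/

import Mathlib

/-!
Since `q = 0`, the first equation integrates to `u' = 2N²w + c`. Substituting this into the
second one, `E = R_c w w' + c u` satisfies `E' = R_c w'² + 4N²(1 - N²) w² + c² ≥ 0`. So `E` is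
nondecreasing, and as it vanishes at `0` and `h`, `E'` vanishes on `(0, h)`; this forces `c = 0`
and `w = 0`, hence `u' = 0` and `u = 0`. Uniqueness then follows by linearity.
-/

/-- `(u, w)` is a (twice continuously differentiable) solution of the reduced
micropolar boundary-value problem on `[0, h]` with forcing constants `q, G`:
`u'' = q + 2N² w'`, `−R_c w'' + 4N² w − 2N² u' = G` on `[0, h]`, with
homogeneous boundary conditions. -/
def IsReducedSolution (N Rc h q G : ℝ) (u w : ℝ → ℝ) : Prop :=
  ContDiffOn ℝ 2 u (Set.Icc 0 h) ∧ ContDiffOn ℝ 2 w (Set.Icc 0 h) ∧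
  (∀ t ∈ Set.Icc (0 : ℝ) h,
    derivWithin (derivWithin u (Set.Icc 0 h)) (Set.Icc 0 h) t =
      q + 2 * N ^ 2 * derivWithin w (Set.Icc 0 h) t) ∧
  (∀ t ∈ Set.Icc (0 : ℝ) h,
    -Rc * derivWithin (derivWithin w (Set.Icc 0 h)) (Set.Icc 0 h) t +
      4 * N ^ 2 * w t - 2 * N ^ 2 * derivWithin u (Set.Icc 0 h) t = G) ∧
  u 0 = 0 ∧ u h = 0 ∧ w 0 = 0 ∧ w h = 0

open Set

theorem eqOn_zero_of_hasDerivAt_of_nonneg_of_eq {f f' : ℝ → ℝ} {a b : ℝ}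
    (hf : ContinuousOn f (Icc a b)) (hf' : ∀ x ∈ Ioo a b, HasDerivAt f (f' x) x)
    (hf'_nonneg : ∀ x ∈ Ioo a b, 0 ≤ f' x) (hfab : f a = f b) : EqOn f' 0 (Ioo a b) := by
  have hmono : MonotoneOn f (Icc a b) := by
    refine monotoneOn_of_hasDerivWithinAt_nonneg (f' := f') (convex_Icc a b) hf ?_ ?_ <;>
      rw [interior_Icc]
    · exact fun x hx => (hf' x hx).hasDerivWithinAt
    · exact hf'_nonneg
  have hconst : EqOn f (fun _ => f a) (Ioo a b) := fun x hx => by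
    have hab : a ≤ b := (hx.1.trans hx.2).le
    exact le_antisymm (hfab ▸ hmono (Ioo_subset_Icc_self hx) (right_mem_Icc.2 hab) hx.2.le)
      (hmono (left_mem_Icc.2 hab) (Ioo_subset_Icc_self hx) hx.1.le)
  intro x hx
  exact (hf' x hx).unique <| (hasDerivAt_const x (f a)).congr_of_eventuallyEq
    (hconst.eventuallyEq_of_mem (isOpen_Ioo.mem_nhds hx))

theorem derivWithin_derivWithin_sub {f g : ℝ → ℝ} {s : Set ℝ} {x : ℝ} (hs : UniqueDiffOn ℝ s)
    (hx : x ∈ s) (hf : ContDiffOn ℝ 2 f s) (hg : ContDiffOn ℝ 2 g s) :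
    derivWithin (derivWithin (f - g) s) s x =
      derivWithin (derivWithin f s) s x - derivWithin (derivWithin g s) s x := by
  simpa only [iteratedDerivWithin_eq_iterate, Function.iterate_succ, Function.iterate_zero,
    Function.comp_apply, id] using iteratedDerivWithin_sub hx hs (hf x hx) (hg x hx)

namespace IsReducedSolution

variable {N Rc h c : ℝ} {u w : ℝ → ℝ}

theorem sub {q₁ G₁ q₂ G₂ : ℝ} {u₁ w₁ u₂ w₂ : ℝ → ℝ} (hh : 0 < h)
    (h₁ : IsReducedSolution N Rc h q₁ G₁ u₁ w₁) (h₂ : IsReducedSolution N Rc h q₂ G₂ u₂ w₂) :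
    IsReducedSolution N Rc h (q₁ - q₂) (G₁ - G₂) (u₁ - u₂) (w₁ - w₂) := by
  obtain ⟨hu₁, hw₁, hU₁, hW₁, hu₁0, hu₁h, hw₁0, hw₁h⟩ := h₁
  obtain ⟨hu₂, hw₂, hU₂, hW₂, hu₂0, hu₂h, hw₂0, hw₂h⟩ := h₂
  have hs := uniqueDiffOn_Icc hh
  have hderiv : ∀ {f g : ℝ → ℝ}, ContDiffOn ℝ 2 f (Icc 0 h) → ContDiffOn ℝ 2 g (Icc 0 h) →
      ∀ t ∈ Icc 0 h, derivWithin (f - g) (Icc 0 h) t =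
        derivWithin f (Icc 0 h) t - derivWithin g (Icc 0 h) t := fun hf hg t ht =>
    derivWithin_sub (hf.differentiableOn two_ne_zero t ht) (hg.differentiableOn two_ne_zero t ht)
  refine ⟨hu₁.sub hu₂, hw₁.sub hw₂, fun t ht => ?_, fun t ht => ?_, ?_, ?_, ?_, ?_⟩
  · rw [derivWithin_derivWithin_sub hs ht hu₁ hu₂, hderiv hw₁ hw₂ t ht, hU₁ t ht, hU₂ t ht]
    ring
  · rw [derivWithin_derivWithin_sub hs ht hw₁ hw₂, hderiv hu₁ hu₂ t ht, Pi.sub_apply]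
    linear_combination hW₁ t ht - hW₂ t ht
  all_goals simp [*]

theorem exists_derivWithin_eq_add_const {G : ℝ} (hh : 0 < h)
    (hsol : IsReducedSolution N Rc h 0 G u w) :
    ∃ c, ∀ t ∈ Icc 0 h, derivWithin u (Icc 0 h) t = 2 * N ^ 2 * w t + c := by
  obtain ⟨hu, hw, hU, -⟩ := hsol
  have hu' := (hu.derivWithin (uniqueDiffOn_Icc hh) (m := 1) (by norm_num)).differentiableOn
    one_ne_zero
  have hwd := hw.differentiableOn two_ne_zero
  have hconst := constant_of_derivWithin_zero (hu'.sub (hwd.const_mul (2 * N ^ 2))) fun t ht => by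
    have hts := Ico_subset_Icc_self ht
    rw [derivWithin_sub (hu' t hts) ((hwd t hts).const_mul _),
      derivWithin_const_mul _ (hwd t hts), hU t hts, zero_add, sub_self]
  exact ⟨_, fun t ht => eq_add_of_sub_eq' (hconst t ht)⟩

theorem hasDerivAt_energy {t : ℝ} (hh : 0 < h) (hsol : IsReducedSolution N Rc h 0 0 u w)
    (hc : ∀ t ∈ Icc 0 h, derivWithin u (Icc 0 h) t = 2 * N ^ 2 * w t + c) (ht : t ∈ Ioo 0 h) :
    HasDerivAt (fun t => Rc * w t * derivWithin w (Icc 0 h) t + c * u t)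
      (Rc * derivWithin w (Icc 0 h) t ^ 2 + 4 * N ^ 2 * (1 - N ^ 2) * w t ^ 2 + c ^ 2) t := by
  obtain ⟨hu, hw, -, hW, -⟩ := hsol
  have hts := Ioo_subset_Icc_self ht
  have hderiv : ∀ f : ℝ → ℝ, DifferentiableOn ℝ f (Icc 0 h) →
      HasDerivAt f (derivWithin f (Icc 0 h) t) t := fun f hf =>
    (hf t hts).hasDerivWithinAt.hasDerivAt (Icc_mem_nhds ht.1 ht.2)
  have hw' := (hw.derivWithin (uniqueDiffOn_Icc hh) (m := 1) (by norm_num)).differentiableOn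
    one_ne_zero
  have hwE := ((hderiv w (hw.differentiableOn two_ne_zero)).const_mul Rc).fun_mul (hderiv _ hw')
  refine (hwE.fun_add ((hderiv u (hu.differentiableOn two_ne_zero)).const_mul c)).congr_deriv ?_
  linear_combination (-w t) * hW t hts + (c - 2 * N ^ 2 * w t) * hc t hts

theorem eqOn_zero (hN0 : 0 < N) (hN1 : N < 1) (hRc : 0 < Rc) (hh : 0 < h)
    (hsol : IsReducedSolution N Rc h 0 0 u w) : EqOn u 0 (Icc 0 h) ∧ EqOn w 0 (Icc 0 h) := by
  obtain ⟨c, hc⟩ := hsol.exists_derivWithin_eq_add_const hh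
  have ⟨hu, hw, _, _, hu0, huh, hw0, hwh⟩ := hsol
  have hk : 0 < 4 * N ^ 2 * (1 - N ^ 2) :=
    mul_pos (by positivity) (sub_pos.2 (pow_lt_one₀ hN0.le hN1 two_ne_zero))
  have hkw : ∀ t, 0 ≤ 4 * N ^ 2 * (1 - N ^ 2) * w t ^ 2 := fun t => mul_nonneg hk.le (sq_nonneg _)
  have hE : ContinuousOn (fun t => Rc * w t * derivWithin w (Icc 0 h) t + c * u t) (Icc 0 h) :=
    ((hw.continuousOn.const_smul Rc).mul
      (hw.derivWithin (uniqueDiffOn_Icc hh) (m := 0) (by norm_num)).continuousOn).add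
      (hu.continuousOn.const_smul c)
  have hE' := eqOn_zero_of_hasDerivAt_of_nonneg_of_eq hE
    (fun t ht => hsol.hasDerivAt_energy hh hc ht)
    (fun t _ => add_nonneg (add_nonneg (by positivity) (hkw t)) (sq_nonneg c))
    (by simp [hu0, huh, hw0, hwh])
  have hvanish : ∀ t ∈ Ioo 0 h, w t = 0 ∧ c = 0 := fun t ht => by
    obtain ⟨hsum, hct⟩ :=
      (add_eq_zero_iff_of_nonneg (add_nonneg (by positivity) (hkw t)) (sq_nonneg c)).1 (hE' ht)
    have hwt := ((add_eq_zero_iff_of_nonneg (by positivity) (hkw t)).1 hsum).2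
    exact ⟨pow_eq_zero_iff two_ne_zero |>.1 ((mul_eq_zero.1 hwt).resolve_left hk.ne'),
      pow_eq_zero_iff two_ne_zero |>.1 hct⟩
  have hc0 : c = 0 := (hvanish (h / 2) ⟨by linarith, by linarith⟩).2
  have hwz : EqOn w 0 (Icc 0 h) := fun t ht => by
    rcases eq_endpoints_or_mem_Ioo_of_mem_Icc ht with rfl | rfl | ht'
    exacts [hw0, hwh, (hvanish t ht').1]
  refine ⟨fun t ht => ?_, hwz⟩
  rw [Pi.zero_apply, ← hu0]
  refine constant_of_derivWithin_zero (hu.differentiableOn two_ne_zero) (fun t ht => ?_) t ht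
  rw [hc t (Ico_subset_Icc_self ht), hwz (Ico_subset_Icc_self ht), hc0, Pi.zero_apply]
  ring

end IsReducedSolution

/-- A solution of the homogeneous reduced micropolar boundary-value problem
vanishes on `[0, h]`; consequently, for any forcing constants `q, G`, the
reduced problem has at most one solution. -/
theorem reduced_micropolar_uniqueness
    (N Rc h : ℝ) (hN0 : 0 < N) (hN1 : N < 1) (hRc : 0 < Rc) (hh : 0 < h)
    (u w : ℝ → ℝ) (hsol : IsReducedSolution N Rc h 0 0 u w) :
    (∀ t ∈ Set.Icc (0 : ℝ) h, u t = 0 ∧ w t = 0) ∧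
    (∀ (q G : ℝ) (u₁ w₁ u₂ w₂ : ℝ → ℝ),
      IsReducedSolution N Rc h q G u₁ w₁ → IsReducedSolution N Rc h q G u₂ w₂ →
      ∀ t ∈ Set.Icc (0 : ℝ) h, u₁ t = u₂ t ∧ w₁ t = w₂ t) := by
  obtain ⟨hu, hw⟩ := hsol.eqOn_zero hN0 hN1 hRc hh
  refine ⟨fun t ht => ⟨hu ht, hw ht⟩, fun q G u₁ w₁ u₂ w₂ h₁ h₂ t ht => ?_⟩
  have hdiff := h₁.sub hh h₂
  rw [sub_self, sub_self] at hdiff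
  obtain ⟨hu, hw⟩ := hdiff.eqOn_zero hN0 hN1 hRc hh
  exact ⟨sub_eq_zero.1 (hu ht), sub_eq_zero.1 (hw ht)⟩
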